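/- Let f be a closure operator on a finite set E such that for every proper flat F of f the Bergman complex Δ(f/F) is shellable, and fix a shelling of each Δ(f/F). Fix a linear extension < of the independence complex of f (a total order on independent sets with I < I' whenever I ⊊ I'). Order the facets of Δ̂(f) by: (I, F_•) ≺ (I', F_•') if both flags are nonempty and either (a) I < I', or (b) I = I' and F_• \ {f(I)} precedes F_•' \ {f(I)} in the fixed shelling of Δ(f/f(I)); and all facets with empty flag (bases) come after all facets with nonempty flag, in any order. Then ≺ is a shelling order of Δ̂(f). -/

import Mathlib

open Finset

/-! ## Simplicial complexes as downward-relevant families of finite faces -/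

section Complexes

variable {V : Type*} {W : Type*}

/-- A facet of a complex (given by its set of faces) is a maximal face. -/
def IsFacet (Δ : Set (Finset V)) (s : Finset V) : Prop :=
  s ∈ Δ ∧ ∀ t ∈ Δ, s ⊆ t → s = t

/-- The deletion of a vertex `v`: all faces not containing `v`. -/
def faceDeletion (Δ : Set (Finset V)) (v : V) : Set (Finset V) :=
  {s ∈ Δ | v ∉ s}

/-- The link of a vertex `v`: faces `τ \ {v}` for `v ∈ τ ∈ Δ`. -/
def faceLink [DecidableEq V] (Δ : Set (Finset V)) (v : V) : Set (Finset V) :=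
  {s | v ∉ s ∧ insert v s ∈ Δ}

/-- Vertex decomposability: `Δ` is a simplex (the family of all subsets of one finite
set, including the case `{∅}`), or it has a vertex `v` whose deletion and link are vertex
decomposable and such that every facet of the deletion is a facet of `Δ`. -/
inductive IsVertexDecomposable [DecidableEq V] : Set (Finset V) → Prop
  | simplex (s : Finset V) : IsVertexDecomposable {t | t ⊆ s}
  | step (Δ : Set (Finset V)) (v : V) :
      {v} ∈ Δ →
      IsVertexDecomposable (faceDeletion Δ v) →
      IsVertexDecomposable (faceLink Δ v) →
      (∀ s, IsFacet (faceDeletion Δ v) s → IsFacet Δ s) →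
      IsVertexDecomposable Δ

/-- A family of faces is pure of dimension `d` if it is nonempty and all of its
maximal elements have cardinality `d + 1`. -/
def IsPureDim (Δ : Set (Finset V)) (d : ℤ) : Prop :=
  Δ.Nonempty ∧ ∀ s, IsFacet Δ s → (s.card : ℤ) = d + 1

/-- `l` is a shelling order of `Δ`: it enumerates the facets of `Δ` without repetition,
and for every `i ≥ 1` the complex `⟨σ₀, …, σ_{i-1}⟩ ∩ ⟨σ_i⟩` is pure of dimension
`dim σ_i - 1 = |σ_i| - 2`. -/
def IsShelling (Δ : Set (Finset V)) (l : List (Finset V)) : Prop :=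
  l.Nodup ∧ (∀ s, s ∈ l ↔ IsFacet Δ s) ∧
  ∀ (i : ℕ) (hi : i < l.length), 0 < i →
    IsPureDim ({t | ∃ s ∈ l.take i, t ⊆ s} ∩ {t | t ⊆ l[i]})
      ((l[i].card : ℤ) - 2)

/-- A complex is shellable if it admits a shelling order of its facets. -/
def Shellable (Δ : Set (Finset V)) : Prop := ∃ l, IsShelling Δ l

/-- The join of two complexes, realized on the sum of the two vertex types. -/
def complexJoin [DecidableEq V] [DecidableEq W]
    (Δ : Set (Finset V)) (Γ : Set (Finset W)) : Set (Finset (V ⊕ W)) :=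
  {s | ∃ a ∈ Δ, ∃ b ∈ Γ, s = a.image Sum.inl ∪ b.image Sum.inr}

/-- An isomorphism of simplicial complexes: a vertex map which is injective on every
face and induces a bijection between the two families of faces. -/
def ComplexIso [DecidableEq W] (Δ : Set (Finset V)) (Γ : Set (Finset W)) : Prop :=
  ∃ φ : V → W,
    (∀ s ∈ Δ, Set.InjOn φ ↑s) ∧
    (∀ s ∈ Δ, s.image φ ∈ Γ) ∧
    (∀ s t, s ∈ Δ → t ∈ Δ → s.image φ = t.image φ → s = t) ∧
    (∀ t ∈ Γ, ∃ s ∈ Δ, s.image φ = t)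

/-- The property of appearing as an initial segment: any entry of `l` earlier than an
entry satisfying `P` also satisfies `P`. -/
def PrefixProp {α : Type*} (l : List α) (P : α → Prop) : Prop :=
  ∀ (i j : ℕ) (hi : i < l.length) (hj : j < l.length), i < j → P l[j] → P l[i]

/-- The property of appearing as a final segment: any entry of `l` later than an
entry satisfying `P` also satisfies `P`. -/
def SuffixProp {α : Type*} (l : List α) (P : α → Prop) : Prop :=
  ∀ (i j : ℕ) (hi : i < l.length) (hj : j < l.length), i < j → P l[i] → P l[j]

/-- `a` appears strictly before `b` in the list `l`. -/
def ListPrec {α : Type*} (l : List α) (a b : α) : Prop :=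
  ∃ (i j : ℕ) (hi : i < l.length) (hj : j < l.length), i < j ∧ l[i] = a ∧ l[j] = b

/-- The h-polynomial of a (finite) complex `Δ`, via
`h(Δ,t) = ∑_{s ∈ Δ} t^{|s|} (1-t)^{(d+1)-|s|}` where `d = dim Δ`. -/
noncomputable def hPoly {V : Type*} [Fintype V] [DecidableEq V]
    (Δ : Set (Finset V)) : Polynomial ℤ :=
  ∑ s ∈ Δ.toFinite.toFinset,
    Polynomial.X ^ s.card *
      (1 - Polynomial.X) ^ (Δ.toFinite.toFinset.sup Finset.card - s.card)

end Complexes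

/-! ## Closure operators -/

/-- A closure operator on the finite set `E`. -/
structure ClosureOp (E : Type*) [Fintype E] [DecidableEq E] where
  cl : Finset E → Finset E
  subset_cl : ∀ A, A ⊆ cl A
  cl_mono : ∀ ⦃A B : Finset E⦄, A ⊆ B → cl A ⊆ cl B
  cl_idem : ∀ A, cl (cl A) = cl A

namespace ClosureOp

variable {E : Type*} [Fintype E] [DecidableEq E]

/-- A flat of `f` is a closed set. -/
def IsFlat (f : ClosureOp E) (F : Finset E) : Prop := f.cl F = F

/-- A proper flat of `f` is a flat different from the whole ground set. -/
def IsProperFlat (f : ClosureOp E) (F : Finset E) : Prop :=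
  f.cl F = F ∧ F ≠ Finset.univ

/-- `I` is independent for `f` if removing any of its elements strictly shrinks its
closure. -/
def Indep (f : ClosureOp E) (I : Finset E) : Prop :=
  ∀ i ∈ I, f.cl (I.erase i) ⊂ f.cl I

/-- A basis is an independent set whose closure is all of `E`. -/
def IsBasis (f : ClosureOp E) (I : Finset E) : Prop :=
  f.Indep I ∧ f.cl I = Finset.univ

/-- The independence complex of `f`: faces are the independent sets. -/
def indepComplex (f : ClosureOp E) : Set (Finset E) := {I | f.Indep I}

/-- The Bergman complex of `f`: faces are chains of proper flats strictly between
`f(∅)` and `E`. A vertex `x_F` is represented by the flat `F` itself. -/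
def bergman (f : ClosureOp E) : Set (Finset (Finset E)) :=
  {C | (∀ F ∈ C, f.IsProperFlat F ∧ f.cl ∅ ⊂ F) ∧
       (∀ F ∈ C, ∀ G ∈ C, F ⊆ G ∨ G ⊆ F)}

/-- The cone over the Bergman complex of `f`: chains of proper flats, where the
bottom flat `f(∅)` is allowed as a member. -/
def coneBergman (f : ClosureOp E) : Set (Finset (Finset E)) :=
  {C | (∀ F ∈ C, f.IsProperFlat F) ∧
       (∀ F ∈ C, ∀ G ∈ C, F ⊆ G ∨ G ⊆ F)}

/-- The augmented Bergman complex of `f`, on the vertex set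
`{y_i : i ∈ E} ⊔ {x_F : F a proper flat}`; here `y_i = Sum.inl i` and
`x_F = Sum.inr F`.  Faces consist of an independent set `I` together with a chain of
proper flats all containing `f(I)`. -/
def augBergman (f : ClosureOp E) : Set (Finset (E ⊕ Finset E)) :=
  {s | ∃ (I : Finset E) (C : Finset (Finset E)),
    s = I.image Sum.inl ∪ C.image Sum.inr ∧
    f.Indep I ∧
    (∀ F ∈ C, f.IsProperFlat F) ∧
    (∀ F ∈ C, ∀ G ∈ C, F ⊆ G ∨ G ⊆ F) ∧
    (∀ F ∈ C, f.cl I ⊆ F)}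

/-- An upper-set of proper flats of `f`. -/
def IsFlatUpperSet (f : ClosureOp E) (L : Set (Finset E)) : Prop :=
  (∀ F ∈ L, f.IsProperFlat F) ∧
  ∀ F ∈ L, ∀ F', f.IsProperFlat F' → F ⊆ F' → F' ∈ L

/-- The induced subcomplex of the augmented Bergman complex on the vertex set
`{y_i : i ∈ E} ⊔ {x_F : F ∈ L}`. -/
def augBergmanOn (f : ClosureOp E) (L : Set (Finset E)) :
    Set (Finset (E ⊕ Finset E)) :=
  {s | s ∈ f.augBergman ∧ ∀ F : Finset E, Sum.inr F ∈ s → F ∈ L}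

/-- The restriction `f|_F` of a closure operator to `F`, as a closure operator on the
subtype `{x // x ∈ F}`; when `F` is a flat, `(f|_F)(A) = f(A)`. -/
def restrict (f : ClosureOp E) (F : Finset E) : ClosureOp {x // x ∈ F} where
  cl A := (f.cl (A.image Subtype.val)).subtype (· ∈ F)
  subset_cl A a ha := by
    rw [Finset.mem_subtype]
    exact f.subset_cl _ (Finset.mem_image_of_mem _ ha)
  cl_mono A B h a ha := by
    rw [Finset.mem_subtype] at *
    exact f.cl_mono (Finset.image_subset_image h) ha
  cl_idem A := by
    have key : ∀ s : Finset E,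
        ((s.subtype (· ∈ F)).image Subtype.val) = s.filter (· ∈ F) := by
      intro s
      ext x
      simp [Finset.mem_subtype, Finset.mem_image, Finset.mem_filter, Subtype.exists,
        and_comm]
    ext a
    rw [Finset.mem_subtype, Finset.mem_subtype, key]
    constructor
    · intro hx
      have h1 : f.cl ((f.cl (A.image Subtype.val)).filter (· ∈ F))
          ⊆ f.cl (A.image Subtype.val) := by
        have := f.cl_mono (Finset.filter_subset (· ∈ F) (f.cl (A.image Subtype.val)))
        rw [f.cl_idem] at this
        exact this
      exact h1 hx
    · intro hx
      refine f.cl_mono ?_ hx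
      intro x hxA
      rw [Finset.mem_filter]
      obtain ⟨a', _, rfl⟩ := Finset.mem_image.mp hxA
      exact ⟨f.subset_cl _ hxA, a'.2⟩

/-- The contraction `f/F` of a closure operator by `F`, as a closure operator on the
subtype `{x // x ∉ F}`; it is given by `(f/F)(A) = f(A ∪ F) \ F`. -/
def contract (f : ClosureOp E) (F : Finset E) : ClosureOp {x // x ∉ F} where
  cl A := (f.cl (A.image Subtype.val ∪ F)).subtype (· ∉ F)
  subset_cl A a ha := by
    rw [Finset.mem_subtype]
    exact f.subset_cl _ (Finset.mem_union_left _ (Finset.mem_image_of_mem _ ha))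
  cl_mono A B h a ha := by
    rw [Finset.mem_subtype] at *
    exact f.cl_mono (Finset.union_subset_union_left (Finset.image_subset_image h)) ha
  cl_idem A := by
    have key : ∀ s : Finset E,
        ((s.subtype (· ∉ F)).image Subtype.val) = s.filter (· ∉ F) := by
      intro s
      ext x
      simp [Finset.mem_subtype, Finset.mem_image, Finset.mem_filter, Subtype.exists,
        and_comm]
    set s := f.cl (A.image Subtype.val ∪ F) with hs
    have hFs : F ⊆ s := fun x hx => f.subset_cl _ (Finset.mem_union_right _ hx)
    have hmain : f.cl ((s.subtype (· ∉ F)).image Subtype.val ∪ F) = s := by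
      rw [key]
      apply le_antisymm
      · have h1 : s.filter (· ∉ F) ∪ F ⊆ s :=
          Finset.union_subset (Finset.filter_subset _ _) hFs
        have := f.cl_mono h1
        rw [hs, f.cl_idem] at this
        exact this
      · refine f.cl_mono ?_
        intro x hx
        rcases Finset.mem_union.mp hx with hx' | hx'
        · obtain ⟨a', _, rfl⟩ := Finset.mem_image.mp hx'
          by_cases hxF : (a' : E) ∈ F
          · exact Finset.mem_union_right _ hxF
          · exact Finset.mem_union_left _
              (Finset.mem_filter.mpr ⟨f.subset_cl _ (Finset.mem_union_left _ hx'), hxF⟩)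
        · exact Finset.mem_union_right _ hx'
    ext a
    rw [Finset.mem_subtype, Finset.mem_subtype, hmain]

end ClosureOp

/-! ## Matroids and their closure operators -/

/-- The closure operator (on finsets) of a matroid whose ground set is all of the
finite type `E`. -/
noncomputable def Matroid.closureOp {E : Type*} [Fintype E] [DecidableEq E]
    (M : Matroid E) (hE : M.E = Set.univ) : ClosureOp E where
  cl A := (M.closure ↑A).toFinite.toFinset
  subset_cl A := by
    intro a ha
    simp only [Set.Finite.mem_toFinset]
    exact M.subset_closure (↑A) (by simp [hE]) ha
  cl_mono A B h := by
    intro a ha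
    simp only [Set.Finite.mem_toFinset] at *
    exact M.closure_subset_closure (Finset.coe_subset.mpr h) ha
  cl_idem A := by
    ext a
    simp only [Set.Finite.mem_toFinset, Set.Finite.coe_toFinset]
    rw [M.closure_closure]

/-! ## The flag-to-basis order on facets of the augmented Bergman complex -/

namespace ClosureOp

variable {E : Type*} [Fintype E] [DecidableEq E]

/-- The independent-set part `I` of a face of the augmented Bergman complex. -/
noncomputable def faceIndep (s : Finset (E ⊕ Finset E)) : Finset E :=
  s.preimage Sum.inl Sum.inl_injective.injOn

/-- The flag part `F_•` of a face of the augmented Bergman complex. -/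
noncomputable def faceFlag (s : Finset (E ⊕ Finset E)) : Finset (Finset E) :=
  s.preimage Sum.inr Sum.inr_injective.injOn

/-- The flag part of a facet with its minimal flat `f(I)` removed, regarded as a face
of the Bergman complex of the contraction `f / f(I)`: each flat `G` of the flag is
sent to the flat `G \ f(I)` of the contraction. -/
noncomputable def reducedFlag (f : ClosureOp E) (s : Finset (E ⊕ Finset E)) : Finset (Finset E) :=
  ((faceFlag s).erase (f.cl (faceIndep s))).image (fun G => G \ f.cl (faceIndep s))

/-- The flag-to-basis order `≺` on facets of the augmented Bergman complex, relative
to a linear extension `r` of the independence complex and a fixed family `sh` of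
shellings of the Bergman complexes of the contractions `f/F`.  Facets with nonempty
flag are compared first by `r` on their independent parts, then (for equal independent
parts) by the position of their reduced flags in the fixed shelling `sh (f.cl I)`
(whose faces are mapped down to `Finset E` level by taking images of `Subtype.val`);
facets with empty flag (bases) come after all facets with nonempty flag. -/
def augPrec (f : ClosureOp E) (r : Finset E → Finset E → Prop)
    (sh : (F : Finset E) → List (Finset (Finset {x // x ∉ F})))
    (s t : Finset (E ⊕ Finset E)) : Prop :=
  ((faceFlag s).Nonempty ∧ (faceFlag t).Nonempty ∧
    (r (faceIndep s) (faceIndep t) ∨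
      (faceIndep s = faceIndep t ∧
        ListPrec ((sh (f.cl (faceIndep s))).map
            (fun c => c.image (fun G => G.image Subtype.val)))
          (f.reducedFlag s) (f.reducedFlag t)))) ∨
  ((faceFlag s).Nonempty ∧ faceFlag t = ∅)

end ClosureOp

/-! ## Auxiliary lemmas for the shelling theorem -/

namespace ClosureOp

set_option linter.unusedSectionVars false

variable {E : Type*} [Fintype E] [DecidableEq E] (f : ClosureOp E)

lemma not_mem_cl_erase_of_indep {I : Finset E} (hI : f.Indep I) {i : E} (hi : i ∈ I) :
    i ∉ f.cl (I.erase i) := by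
  intro h
  have hsub : I ⊆ f.cl (I.erase i) := by
    intro x hx
    by_cases hxi : x = i
    · subst hxi; exact h
    · exact f.subset_cl _ (Finset.mem_erase.mpr ⟨hxi, hx⟩)
  have h2 : f.cl I ⊆ f.cl (I.erase i) := by
    have := f.cl_mono hsub
    rwa [f.cl_idem] at this
  exact (hI i hi).not_subset h2

lemma indep_subset {I J : Finset E} (hI : f.Indep I) (hJI : J ⊆ I) : f.Indep J := by
  intro i hi
  have h1 : i ∉ f.cl (J.erase i) := fun h =>
    not_mem_cl_erase_of_indep f hI (hJI hi)
      (f.cl_mono (Finset.erase_subset_erase i hJI) h)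
  rw [Finset.ssubset_def]
  refine ⟨f.cl_mono (Finset.erase_subset i J), fun hsub => h1 (hsub (f.subset_cl _ hi))⟩

lemma not_indep_insert {K : Finset E} {j : E} (hj : j ∈ f.cl K) (hjK : j ∉ K) :
    ¬ f.Indep (insert j K) := by
  intro hI
  have h1 := hI j (Finset.mem_insert_self j K)
  rw [Finset.erase_insert hjK] at h1
  have h2 : f.cl (insert j K) ⊆ f.cl K := by
    have : insert j K ⊆ f.cl K := Finset.insert_subset hj (f.subset_cl K)
    have := f.cl_mono this
    rwa [f.cl_idem] at this
  exact h1.not_subset h2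

/-- Build a face of the augmented Bergman complex from its two parts. -/
def mkFace (I : Finset E) (C : Finset (Finset E)) : Finset (E ⊕ Finset E) :=
  I.image Sum.inl ∪ C.image Sum.inr

lemma mem_mkFace_inl {I : Finset E} {C : Finset (Finset E)} {x : E} :
    Sum.inl x ∈ mkFace I C ↔ x ∈ I := by simp [mkFace]

lemma mem_mkFace_inr {I : Finset E} {C : Finset (Finset E)} {G : Finset E} :
    Sum.inr G ∈ mkFace I C ↔ G ∈ C := by simp [mkFace]

lemma faceIndep_mkFace (I : Finset E) (C : Finset (Finset E)) :
    faceIndep (mkFace I C) = I := by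
  ext x; simp [faceIndep, Finset.mem_preimage, mem_mkFace_inl]

lemma faceFlag_mkFace (I : Finset E) (C : Finset (Finset E)) :
    faceFlag (mkFace I C) = C := by
  ext G; simp [faceFlag, Finset.mem_preimage, mem_mkFace_inr]

lemma eq_mkFace (s : Finset (E ⊕ Finset E)) : s = mkFace (faceIndep s) (faceFlag s) := by
  ext x
  cases x with
  | inl a => simp [mem_mkFace_inl, faceIndep, Finset.mem_preimage]
  | inr G => simp [mem_mkFace_inr, faceFlag, Finset.mem_preimage]

lemma mkFace_subset_mkFace {I J : Finset E} {C D : Finset (Finset E)} :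
    mkFace I C ⊆ mkFace J D ↔ I ⊆ J ∧ C ⊆ D := by
  constructor
  · intro h
    refine ⟨fun x hx => ?_, fun G hG => ?_⟩
    · exact mem_mkFace_inl.mp (h (mem_mkFace_inl.mpr hx))
    · exact mem_mkFace_inr.mp (h (mem_mkFace_inr.mpr hG))
  · rintro ⟨h1, h2⟩ x hx
    cases x with
    | inl a => exact mem_mkFace_inl.mpr (h1 (mem_mkFace_inl.mp hx))
    | inr G => exact mem_mkFace_inr.mpr (h2 (mem_mkFace_inr.mp hx))

/-- The combined conditions on the two parts of a face of `augBergman`. -/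
def GoodPair (I : Finset E) (C : Finset (Finset E)) : Prop :=
  f.Indep I ∧ (∀ F ∈ C, f.IsProperFlat F) ∧
    (∀ F ∈ C, ∀ G ∈ C, F ⊆ G ∨ G ⊆ F) ∧ (∀ F ∈ C, f.cl I ⊆ F)

lemma mkFace_mem_augBergman {I : Finset E} {C : Finset (Finset E)}
    (h : f.GoodPair I C) : mkFace I C ∈ f.augBergman :=
  ⟨I, C, rfl, h.1, h.2.1, h.2.2.1, h.2.2.2⟩

lemma goodPair_of_mem {s : Finset (E ⊕ Finset E)} (h : s ∈ f.augBergman) :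
    f.GoodPair (faceIndep s) (faceFlag s) := by
  obtain ⟨I, C, rfl, h1, h2, h3, h4⟩ := h
  show f.GoodPair (faceIndep (mkFace I C)) (faceFlag (mkFace I C))
  rw [faceIndep_mkFace, faceFlag_mkFace]
  exact ⟨h1, h2, h3, h4⟩

end ClosureOp
namespace ClosureOp

set_option linter.unusedSectionVars false

variable {E : Type*} [Fintype E] [DecidableEq E] (f : ClosureOp E)

lemma isFacet_mkFace_of_maximal {I : Finset E} {C : Finset (Finset E)}
    (hg : f.GoodPair I C) (hcl : f.cl I ∈ C)
    (hmax : ∀ G, f.IsProperFlat G → f.cl I ⊆ G →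
      (∀ F ∈ C, F ⊆ G ∨ G ⊆ F) → G ∈ C) :
    IsFacet f.augBergman (mkFace I C) := by
  refine ⟨mkFace_mem_augBergman f hg, ?_⟩
  intro t ht hsub
  obtain ⟨g1, g2, g3, g4⟩ := goodPair_of_mem f ht
  rw [eq_mkFace t] at hsub ⊢
  rw [mkFace_subset_mkFace] at hsub
  obtain ⟨hIJ, hCD⟩ := hsub
  have hclJI : f.cl (faceIndep t) ⊆ f.cl I := g4 _ (hCD hcl)
  have hJI : faceIndep t = I := by
    apply Finset.Subset.antisymm _ hIJ
    intro j hj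
    by_contra hjI
    have hjcl : j ∈ f.cl I := hclJI (f.subset_cl _ hj)
    exact not_indep_insert f hjcl hjI
      (indep_subset f g1 (Finset.insert_subset hj hIJ))
  have hDC : faceFlag t = C := by
    apply Finset.Subset.antisymm _ hCD
    intro G hG
    exact hmax G (g2 G hG) (hJI ▸ g4 G hG) (fun F hF => g3 F (hCD hF) G hG)
  rw [hJI, hDC]

lemma isFacet_basis {I : Finset E} (hI : f.Indep I) (hcl : f.cl I = Finset.univ) :
    IsFacet f.augBergman (mkFace I ∅) := by
  refine ⟨mkFace_mem_augBergman f ⟨hI, by simp, by simp, by simp⟩, ?_⟩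
  intro t ht hsub
  obtain ⟨g1, g2, g3, g4⟩ := goodPair_of_mem f ht
  rw [eq_mkFace t] at hsub ⊢
  rw [mkFace_subset_mkFace] at hsub
  have hD : faceFlag t = ∅ := by
    rw [Finset.eq_empty_iff_forall_notMem]
    intro F hF
    have h1 : f.cl I ⊆ f.cl (faceIndep t) := f.cl_mono hsub.1
    have h2 : Finset.univ ⊆ F := le_trans (hcl ▸ h1) (g4 F hF)
    exact (g2 F hF).2 (Finset.Subset.antisymm (Finset.subset_univ F) h2)
  have hJ : faceIndep t = I := by
    apply Finset.Subset.antisymm _ hsub.1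
    intro j hj
    by_contra hjI
    exact not_indep_insert f (hcl ▸ Finset.mem_univ j) hjI
      (indep_subset f g1 (Finset.insert_subset hj hsub.1))
  rw [hJ, hD]

lemma facet_flag_max {s : Finset (E ⊕ Finset E)} (hs : IsFacet f.augBergman s) :
    ∀ G, f.IsProperFlat G → f.cl (faceIndep s) ⊆ G →
      (∀ F ∈ faceFlag s, F ⊆ G ∨ G ⊆ F) → G ∈ faceFlag s := by
  intro G hG hclG hcomp
  by_contra hGC
  obtain ⟨g1, g2, g3, g4⟩ := goodPair_of_mem f hs.1
  have hmem : mkFace (faceIndep s) (insert G (faceFlag s)) ∈ f.augBergman := by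
    refine mkFace_mem_augBergman f ⟨g1, ?_, ?_, ?_⟩
    · intro F hF
      rcases Finset.mem_insert.mp hF with rfl | hF
      · exact hG
      · exact g2 F hF
    · intro F hF G' hG'
      rcases Finset.mem_insert.mp hF with h1 | h1
      · rcases Finset.mem_insert.mp hG' with h2 | h2
        · exact Or.inl (le_of_eq (h1.trans h2.symm))
        · exact h1 ▸ (hcomp G' h2).symm
      · rcases Finset.mem_insert.mp hG' with h2 | h2
        · exact h2 ▸ hcomp F h1
        · exact g3 F h1 G' h2
    · intro F hF
      rcases Finset.mem_insert.mp hF with rfl | hF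
      · exact hclG
      · exact g4 F hF
  have heq := hs.2 _ hmem (by
    conv_lhs => rw [eq_mkFace s]
    rw [mkFace_subset_mkFace]
    exact ⟨Finset.Subset.rfl, Finset.subset_insert _ _⟩)
  have : faceFlag s = insert G (faceFlag s) := by
    conv_lhs => rw [heq]
    rw [faceFlag_mkFace]
  exact hGC (this ▸ Finset.mem_insert_self G (faceFlag s))

lemma facet_cl_mem_flag {s : Finset (E ⊕ Finset E)} (hs : IsFacet f.augBergman s)
    (hne : f.cl (faceIndep s) ≠ Finset.univ) : f.cl (faceIndep s) ∈ faceFlag s := by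
  obtain ⟨g1, g2, g3, g4⟩ := goodPair_of_mem f hs.1
  exact facet_flag_max f hs _ ⟨f.cl_idem _, hne⟩ Finset.Subset.rfl
    (fun F hF => Or.inr (g4 F hF))

lemma facet_cl_univ_of_flag_empty {s : Finset (E ⊕ Finset E)}
    (hs : IsFacet f.augBergman s) (hflag : faceFlag s = ∅) :
    f.cl (faceIndep s) = Finset.univ := by
  by_contra hne
  have := facet_cl_mem_flag f hs hne
  rw [hflag] at this
  exact absurd this (Finset.notMem_empty _)

lemma facet_flag_nonempty_props {s : Finset (E ⊕ Finset E)}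
    (hs : IsFacet f.augBergman s) (hflag : (faceFlag s).Nonempty) :
    f.cl (faceIndep s) ∈ faceFlag s ∧ f.IsProperFlat (f.cl (faceIndep s)) := by
  obtain ⟨g1, g2, g3, g4⟩ := goodPair_of_mem f hs.1
  obtain ⟨F, hF⟩ := hflag
  have hne : f.cl (faceIndep s) ≠ Finset.univ := by
    intro h
    exact (g2 F hF).2 (Finset.Subset.antisymm (Finset.subset_univ F) (h ▸ g4 F hF))
  exact ⟨facet_cl_mem_flag f hs hne, ⟨f.cl_idem _, hne⟩⟩

lemma exists_facet_superset {s : Finset (E ⊕ Finset E)} (hs : s ∈ f.augBergman) :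
    ∃ t, s ⊆ t ∧ IsFacet f.augBergman t := by
  classical
  set S := Finset.univ.filter
    (fun t : Finset (E ⊕ Finset E) => t ∈ f.augBergman ∧ s ⊆ t) with hS
  have hne : S.Nonempty := ⟨s, by simp [hS, hs]⟩
  obtain ⟨t, htS, htmax⟩ := S.exists_maximal hne
  simp only [hS, Finset.mem_filter, Finset.mem_univ, true_and] at htS htmax
  refine ⟨t, htS.2, htS.1, ?_⟩
  intro u hu htu
  by_contra hne'
  exact hne' (Finset.Subset.antisymm htu (htmax ⟨hu, htS.2.trans htu⟩ htu))

end ClosureOp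
namespace ClosureOp

set_option linter.unusedSectionVars false

variable {E : Type*} [Fintype E] [DecidableEq E] (f : ClosureOp E)

lemma subtype_val_image (p : E → Prop) [DecidablePred p] (s : Finset E) :
    (s.subtype p).image Subtype.val = s.filter p := by
  ext x
  simp [Finset.mem_subtype, Finset.mem_image, Finset.mem_filter, Subtype.exists, and_comm]

/-- Lift a flat of the contraction `f/F` to a flat of `f` containing `F`. -/
def upFlat (F : Finset E) (A : Finset {x // x ∉ F}) : Finset E :=
  A.image Subtype.val ∪ F

/-- Push a flat of `f` containing `F` down to a flat of the contraction `f/F`. -/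
def dnFlat (F : Finset E) (G : Finset E) : Finset {x // x ∉ F} :=
  G.subtype (· ∉ F)

variable {F : Finset E}

lemma dnFlat_upFlat (A : Finset {x // x ∉ F}) : dnFlat F (upFlat F A) = A := by
  ext ⟨x, hx⟩
  simp only [dnFlat, upFlat, Finset.mem_subtype, Finset.mem_union, Finset.mem_image,
    Subtype.exists]
  constructor
  · rintro (⟨b, hb, hbA, rfl⟩ | hxF)
    · exact hbA
    · exact absurd hxF hx
  · intro h
    exact Or.inl ⟨x, hx, h, rfl⟩

lemma upFlat_dnFlat {G : Finset E} (hFG : F ⊆ G) : upFlat F (dnFlat F G) = G := by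
  rw [upFlat, dnFlat, subtype_val_image]
  ext x
  simp only [Finset.mem_union, Finset.mem_filter]
  constructor
  · rintro (⟨h, _⟩ | h)
    · exact h
    · exact hFG h
  · intro h
    by_cases hx : x ∈ F
    · exact Or.inr hx
    · exact Or.inl ⟨h, hx⟩

lemma upFlat_mono {A B : Finset {x // x ∉ F}} (h : A ⊆ B) : upFlat F A ⊆ upFlat F B :=
  Finset.union_subset_union_left (Finset.image_subset_image h)

lemma dnFlat_mono {G G' : Finset E} (h : G ⊆ G') : dnFlat F G ⊆ dnFlat F G' := by
  intro x hx
  rw [dnFlat, Finset.mem_subtype] at *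
  exact h hx

lemma dnFlat_subset_iff {G G' : Finset E} (hG : F ⊆ G) (hG' : F ⊆ G') :
    dnFlat F G ⊆ dnFlat F G' ↔ G ⊆ G' := by
  constructor
  · intro h
    rw [← upFlat_dnFlat hG, ← upFlat_dnFlat hG']
    exact upFlat_mono h
  · exact dnFlat_mono

lemma dnFlat_inj {G G' : Finset E} (hG : F ⊆ G) (hG' : F ⊆ G')
    (h : dnFlat F G = dnFlat F G') : G = G' := by
  rw [← upFlat_dnFlat hG, ← upFlat_dnFlat hG', h]

lemma dnFlat_nonempty {G : Finset E} (h : F ⊂ G) : (dnFlat F G).Nonempty := by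
  obtain ⟨x, hxG, hxF⟩ := Finset.exists_of_ssubset h
  exact ⟨⟨x, hxF⟩, Finset.mem_subtype.mpr hxG⟩

lemma upFlat_ne {A : Finset {x // x ∉ F}} (hA : A.Nonempty) : upFlat F A ≠ F := by
  obtain ⟨a, ha⟩ := hA
  intro h
  have : (a : E) ∈ upFlat F A := Finset.mem_union_left _ (Finset.mem_image_of_mem _ ha)
  rw [h] at this
  exact a.2 this

lemma upFlat_sdiff {A : Finset {x // x ∉ F}} : upFlat F A \ F = A.image Subtype.val := by
  rw [upFlat, Finset.union_sdiff_right]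
  apply Finset.sdiff_eq_self_iff_disjoint.mpr
  rw [Finset.disjoint_left]
  rintro x hx
  obtain ⟨a, _, rfl⟩ := Finset.mem_image.mp hx
  exact a.2

lemma contract_cl_def (A : Finset {x // x ∉ F}) :
    (f.contract F).cl A = (f.cl (A.image Subtype.val ∪ F)).subtype (· ∉ F) := rfl

lemma contract_cl_empty (hF : f.cl F = F) : (f.contract F).cl ∅ = ∅ := by
  rw [contract_cl_def]
  simp only [Finset.image_empty, Finset.empty_union, hF]
  ext ⟨x, hx⟩
  simp [Finset.mem_subtype, hx]

lemma isProperFlat_dnFlat {G : Finset E} (hG : f.IsProperFlat G) (hFG : F ⊆ G) :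
    (f.contract F).IsProperFlat (dnFlat F G) := by
  constructor
  · show (f.cl ((G.subtype (· ∉ F)).image Subtype.val ∪ F)).subtype (· ∉ F) = _
    rw [subtype_val_image]
    have h1 : G.filter (· ∉ F) ∪ F = G := by
      ext x
      simp only [Finset.mem_union, Finset.mem_filter]
      constructor
      · rintro (⟨h, _⟩ | h)
        · exact h
        · exact hFG h
      · intro h
        by_cases hx : x ∈ F
        · exact Or.inr hx
        · exact Or.inl ⟨h, hx⟩
    rw [h1, hG.1]
    rfl
  · intro h
    have hex : ∃ x, x ∉ G := by
      by_contra hc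
      push_neg at hc
      exact hG.2 (Finset.eq_univ_iff_forall.mpr hc)
    obtain ⟨x, hxG⟩ := hex
    have hxF : x ∉ F := fun hx => hxG (hFG hx)
    have : (⟨x, hxF⟩ : {x // x ∉ F}) ∈ dnFlat F G := h ▸ Finset.mem_univ _
    exact hxG (Finset.mem_subtype.mp this)

lemma isProperFlat_upFlat (hF : f.cl F = F) {A : Finset {x // x ∉ F}}
    (hA : (f.contract F).IsProperFlat A) :
    f.IsProperFlat (upFlat F A) ∧ F ⊆ upFlat F A := by
  have hclA : (f.cl (A.image Subtype.val ∪ F)).subtype (· ∉ F) = A := hA.1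
  have hFsub : F ⊆ upFlat F A := Finset.subset_union_right
  refine ⟨⟨?_, ?_⟩, hFsub⟩
  · show f.cl (A.image Subtype.val ∪ F) = upFlat F A
    apply Finset.Subset.antisymm
    · intro x hx
      by_cases hxF : x ∈ F
      · exact Finset.mem_union_right _ hxF
      · have : x ∈ (f.cl (A.image Subtype.val ∪ F)).filter (· ∉ F) :=
          Finset.mem_filter.mpr ⟨hx, hxF⟩
        rw [← subtype_val_image, hclA] at this
        exact Finset.mem_union_left _ this
    · exact f.subset_cl _
  · intro h
    have hex : ∃ a : {x // x ∉ F}, a ∉ A := by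
      by_contra hc
      push_neg at hc
      exact hA.2 (Finset.eq_univ_iff_forall.mpr hc)
    obtain ⟨a, haA⟩ := hex
    have : (a : E) ∈ upFlat F A := h ▸ Finset.mem_univ _
    rcases Finset.mem_union.mp this with h' | h'
    · obtain ⟨b, hb, hba⟩ := Finset.mem_image.mp h'
      exact haA (Subtype.ext hba ▸ hb)
    · exact a.2 h'

lemma mem_bergman_contract_iff (hF : f.cl F = F) {C : Finset (Finset {x // x ∉ F})} :
    C ∈ (f.contract F).bergman ↔
      (∀ A ∈ C, (f.contract F).IsProperFlat A ∧ A.Nonempty) ∧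
      (∀ A ∈ C, ∀ B ∈ C, A ⊆ B ∨ B ⊆ A) := by
  unfold bergman
  rw [Set.mem_setOf_eq]
  have hcl : (f.contract F).cl ∅ = ∅ := contract_cl_empty f hF
  constructor
  · rintro ⟨h1, h2⟩
    exact ⟨fun A hA => ⟨(h1 A hA).1, by
      have := (h1 A hA).2
      rw [hcl] at this
      exact Finset.nonempty_iff_ne_empty.mpr (fun h => by simp [h] at this)⟩, h2⟩
  · rintro ⟨h1, h2⟩
    refine ⟨fun A hA => ⟨(h1 A hA).1, ?_⟩, h2⟩
    rw [hcl]
    exact Finset.empty_ssubset.mpr (h1 A hA).2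

end ClosureOp
namespace ClosureOp

set_option linter.unusedSectionVars false

variable {E : Type*} [Fintype E] [DecidableEq E] (f : ClosureOp E)

/-- Lifting a facet of the Bergman complex of the contraction to a facet of the
augmented Bergman complex. -/
lemma isFacet_up {I : Finset E} (hI : f.Indep I) (hFp : f.IsProperFlat (f.cl I))
    {c : Finset (Finset {x // x ∉ f.cl I})}
    (hc : IsFacet ((f.contract (f.cl I)).bergman) c) :
    IsFacet f.augBergman (mkFace I (insert (f.cl I) (c.image (upFlat (f.cl I))))) := by
  have hF : f.cl (f.cl I) = (f.cl I) := f.cl_idem I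
  obtain ⟨hmem1, hmem2⟩ := (mem_bergman_contract_iff f hF).mp hc.1
  have hflats : ∀ G ∈ insert (f.cl I) (c.image (upFlat (f.cl I))),
      f.IsProperFlat G ∧ (f.cl I) ⊆ G := by
    intro G hG
    rcases Finset.mem_insert.mp hG with rfl | hG
    · exact ⟨hFp, Finset.Subset.rfl⟩
    · obtain ⟨A, hA, rfl⟩ := Finset.mem_image.mp hG
      exact isProperFlat_upFlat f hF (hmem1 A hA).1
  apply isFacet_mkFace_of_maximal
  · refine ⟨hI, fun G hG => (hflats G hG).1, ?_, fun G hG => (hflats G hG).2⟩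
    intro G hG G' hG'
    rcases Finset.mem_insert.mp hG with rfl | hG
    · exact Or.inl (hflats G' hG').2
    · rcases Finset.mem_insert.mp hG' with rfl | hG'
      · obtain ⟨A, hA, rfl⟩ := Finset.mem_image.mp hG
        exact Or.inr Finset.subset_union_right
      · obtain ⟨A, hA, rfl⟩ := Finset.mem_image.mp hG
        obtain ⟨B, hB, rfl⟩ := Finset.mem_image.mp hG'
        rcases hmem2 A hA B hB with h | h
        · exact Or.inl (upFlat_mono h)
        · exact Or.inr (upFlat_mono h)
  · exact Finset.mem_insert_self (f.cl I) _
  · intro G hG hFG hcomp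
    by_cases hGF : G = (f.cl I)
    · subst hGF; exact Finset.mem_insert_self _ _
    · have hFG' : (f.cl I) ⊂ G := Finset.ssubset_iff_subset_ne.mpr ⟨hFG, Ne.symm hGF⟩
      have hdn : (f.contract (f.cl I)).IsProperFlat (dnFlat (f.cl I) G) := isProperFlat_dnFlat f hG hFG
      have hdnne : (dnFlat (f.cl I) G).Nonempty := dnFlat_nonempty hFG'
      have hins : insert (dnFlat (f.cl I) G) c ∈ (f.contract (f.cl I)).bergman := by
        rw [mem_bergman_contract_iff f hF]
        constructor
        · intro A hA
          rcases Finset.mem_insert.mp hA with rfl | hA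
          · exact ⟨hdn, hdnne⟩
          · exact hmem1 A hA
        · have key : ∀ B ∈ c, dnFlat (f.cl I) G ⊆ B ∨ B ⊆ dnFlat (f.cl I) G := by
            intro B hB
            rcases hcomp (upFlat (f.cl I) B) (Finset.mem_insert_of_mem
                (Finset.mem_image_of_mem _ hB)) with h | h
            · have := dnFlat_mono (F := f.cl I) h
              rw [dnFlat_upFlat] at this
              exact Or.inr this
            · have := dnFlat_mono (F := f.cl I) h
              rw [dnFlat_upFlat] at this
              exact Or.inl this
          intro A hA B hB
          rcases Finset.mem_insert.mp hA with h1 | h1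
          · rcases Finset.mem_insert.mp hB with h2 | h2
            · exact Or.inl (le_of_eq (h1.trans h2.symm))
            · exact h1 ▸ key B h2
          · rcases Finset.mem_insert.mp hB with h2 | h2
            · exact h2 ▸ (key A h1).symm
            · exact hmem2 A h1 B h2
      have heq := hc.2 _ hins (Finset.subset_insert _ _)
      have hdnc : dnFlat (f.cl I) G ∈ c := heq ▸ Finset.mem_insert_self _ _
      have : upFlat (f.cl I) (dnFlat (f.cl I) G) ∈ c.image (upFlat (f.cl I)) := Finset.mem_image_of_mem _ hdnc
      rw [upFlat_dnFlat hFG] at this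
      exact Finset.mem_insert_of_mem this

/-- Pushing a facet of the augmented Bergman complex with nonempty flag down to a
facet of the Bergman complex of the contraction. -/
lemma isFacet_down {s : Finset (E ⊕ Finset E)} (hs : IsFacet f.augBergman s)
    (hflag : (faceFlag s).Nonempty) :
    IsFacet ((f.contract (f.cl (faceIndep s))).bergman)
      (((faceFlag s).erase (f.cl (faceIndep s))).image (dnFlat (f.cl (faceIndep s)))) := by
  obtain ⟨g1, g2, g3, g4⟩ := goodPair_of_mem f hs.1
  obtain ⟨hFC, hFp⟩ := facet_flag_nonempty_props f hs hflag
  set I := faceIndep s with hIdef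
  set C := faceFlag s with hCdef
  set F := f.cl I with hFdef
  have hF : f.cl F = F := f.cl_idem I
  have herase : ∀ G ∈ C.erase F, f.IsProperFlat G ∧ F ⊂ G := by
    intro G hG
    obtain ⟨hGne, hGC⟩ := Finset.mem_erase.mp hG
    exact ⟨g2 G hGC, Finset.ssubset_iff_subset_ne.mpr ⟨g4 G hGC, Ne.symm hGne⟩⟩
  constructor
  · rw [mem_bergman_contract_iff f hF]
    constructor
    · intro A hA
      obtain ⟨G, hG, rfl⟩ := Finset.mem_image.mp hA
      exact ⟨isProperFlat_dnFlat f (herase G hG).1 (herase G hG).2.subset,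
        dnFlat_nonempty (herase G hG).2⟩
    · intro A hA B hB
      obtain ⟨G, hG, rfl⟩ := Finset.mem_image.mp hA
      obtain ⟨G', hG', rfl⟩ := Finset.mem_image.mp hB
      rcases g3 G (Finset.mem_of_mem_erase hG) G' (Finset.mem_of_mem_erase hG') with h | h
      · exact Or.inl (dnFlat_mono h)
      · exact Or.inr (dnFlat_mono h)
  · intro c₂ hc₂ hsub
    obtain ⟨k1, k2⟩ := (mem_bergman_contract_iff f hF).mp hc₂
    apply Finset.Subset.antisymm hsub
    intro A hA
    obtain ⟨hupflat, hFup⟩ := isProperFlat_upFlat f hF (k1 A hA).1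
    have hupC : upFlat F A ∈ C := by
      apply facet_flag_max f hs _ hupflat hFup
      intro G' hG'
      by_cases hG'F : G' = F
      · exact Or.inl (hG'F ▸ hFup)
      · have hG'e : G' ∈ C.erase F := Finset.mem_erase.mpr ⟨hG'F, hG'⟩
        have hdnG' : dnFlat F G' ∈ c₂ := hsub (Finset.mem_image_of_mem _ hG'e)
        rcases k2 _ hdnG' A hA with h | h
        · have := upFlat_mono (F := F) h
          rw [upFlat_dnFlat (herase G' hG'e).2.subset] at this
          exact Or.inl this
        · have := upFlat_mono (F := F) h
          rw [upFlat_dnFlat (herase G' hG'e).2.subset] at this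
          exact Or.inr this
    have hne : upFlat F A ≠ F := upFlat_ne (k1 A hA).2
    have : dnFlat F (upFlat F A) ∈ (C.erase F).image (dnFlat F) :=
      Finset.mem_image_of_mem _ (Finset.mem_erase.mpr ⟨hne, hupC⟩)
    rwa [dnFlat_upFlat] at this

lemma reducedFlag_eq {s : Finset (E ⊕ Finset E)} :
    f.reducedFlag s =
      (((faceFlag s).erase (f.cl (faceIndep s))).image (dnFlat (f.cl (faceIndep s)))).image
        (fun A => A.image Subtype.val) := by
  rw [reducedFlag, Finset.image_image]
  apply Finset.image_congr
  intro G _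
  show G \ f.cl (faceIndep s) = (dnFlat (f.cl (faceIndep s)) G).image Subtype.val
  rw [dnFlat, subtype_val_image, Finset.sdiff_eq_filter]

lemma image_val_injective {F : Finset E} :
    Function.Injective (fun A : Finset {x // x ∉ F} => A.image Subtype.val) :=
  fun _ _ h => Finset.image_injective Subtype.val_injective h

end ClosureOp
section Helpers

variable {V : Type*} [DecidableEq V]

lemma exists_maximal_face (Δ : Set (Finset V)) (c : Finset V)
    (hc : ∀ t ∈ Δ, t ⊆ c) {u : Finset V} (hu : u ∈ Δ) :
    ∃ t, u ⊆ t ∧ IsFacet Δ t := by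
  classical
  set S := c.powerset.filter (fun t => t ∈ Δ ∧ u ⊆ t) with hS
  have huS : u ∈ S := by
    simp only [hS, Finset.mem_filter, Finset.mem_powerset]
    exact ⟨hc u hu, hu, Finset.Subset.rfl⟩
  have hne : S.Nonempty := ⟨u, huS⟩
  obtain ⟨t, ht, hmax⟩ := S.exists_maximal hne
  simp only [hS, Finset.mem_filter, Finset.mem_powerset] at ht
  refine ⟨t, ht.2.2, ht.2.1, ?_⟩
  intro w hw hsub
  by_contra hne'
  refine hne' (Finset.Subset.antisymm hsub (hmax ?_ hsub))
  simp only [hS, Finset.mem_filter, Finset.mem_powerset]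
  exact ⟨hc w hw, hw, ht.2.2.trans hsub⟩

lemma facet_eq_erase {t c : Finset V} (hsub : t ⊆ c)
    (hcard : (t.card : ℤ) = (c.card : ℤ) - 1) :
    ∃ g ∈ c, g ∉ t ∧ t = c.erase g := by
  have h1 : t.card + 1 = c.card := by omega
  have h2 : (c \ t).card = 1 := by rw [Finset.card_sdiff_of_subset hsub]; omega
  obtain ⟨g, hg⟩ := Finset.card_eq_one.mp h2
  have hgmem : g ∈ c \ t := hg ▸ Finset.mem_singleton_self g
  have hgc : g ∈ c := (Finset.mem_sdiff.mp hgmem).1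
  have hgt : g ∉ t := (Finset.mem_sdiff.mp hgmem).2
  refine ⟨g, hgc, hgt, ?_⟩
  ext x
  constructor
  · intro hx
    exact Finset.mem_erase.mpr ⟨fun h => hgt (h ▸ hx), hsub hx⟩
  · intro hx
    obtain ⟨hxg, hxc⟩ := Finset.mem_erase.mp hx
    by_contra hxt
    have : x ∈ c \ t := Finset.mem_sdiff.mpr ⟨hxc, hxt⟩
    rw [hg] at this
    exact hxg (Finset.mem_singleton.mp this)

/-- A facet of a pure complex through a given face, which must be a "wall". -/
lemma pure_exists_wall {Δ : Set (Finset V)} {c : Finset V} {d : ℤ}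
    (hpure : IsPureDim Δ d) (hc : ∀ t ∈ Δ, t ⊆ c) {u : Finset V} (hu : u ∈ Δ) :
    ∃ t, u ⊆ t ∧ t ∈ Δ ∧ (t.card : ℤ) = d + 1 := by
  obtain ⟨t, hut, hft⟩ := exists_maximal_face Δ c hc hu
  exact ⟨t, hut, hft.1, hpure.2 t hft⟩

end Helpers

namespace ClosureOp

set_option linter.unusedSectionVars false

variable {E : Type*} [Fintype E] [DecidableEq E] (f : ClosureOp E)

lemma cl_erase_ne_univ {σ : Finset (E ⊕ Finset E)} (hσ : IsFacet f.augBergman σ)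
    {v₀ : E} (hv : v₀ ∈ faceIndep σ) :
    f.cl ((faceIndep σ).erase v₀) ≠ Finset.univ := by
  obtain ⟨g1, _, _, _⟩ := goodPair_of_mem f hσ.1
  by_cases h : f.cl (faceIndep σ) = Finset.univ
  · exact fun hX => ((g1 v₀ hv).ne (hX.trans h.symm))
  · intro hX
    exact h (Finset.Subset.antisymm (Finset.subset_univ _)
      (hX ▸ f.cl_mono (Finset.erase_subset _ _)))

/-- The facet used to cover a wall obtained by deleting a `y`-vertex. -/
lemma exists_wall_facet_inl {σ : Finset (E ⊕ Finset E)} (hσ : IsFacet f.augBergman σ)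
    {v₀ : E} (hv : v₀ ∈ faceIndep σ) :
    ∃ t, IsFacet f.augBergman t ∧ σ.erase (Sum.inl v₀) ⊆ t ∧
      faceIndep t = (faceIndep σ).erase v₀ ∧ (faceFlag t).Nonempty := by
  obtain ⟨g1, g2, g3, g4⟩ := goodPair_of_mem f hσ.1
  have hXuniv : f.cl ((faceIndep σ).erase v₀) ≠ Finset.univ := cl_erase_ne_univ f hσ hv
  have hXflat : f.IsProperFlat (f.cl ((faceIndep σ).erase v₀)) := ⟨f.cl_idem _, hXuniv⟩
  have hXle : ∀ G ∈ faceFlag σ, f.cl ((faceIndep σ).erase v₀) ⊆ G := fun G hG =>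
    le_trans (f.cl_mono (Finset.erase_subset _ _)) (g4 G hG)
  have hgood : f.GoodPair ((faceIndep σ).erase v₀)
      (insert (f.cl ((faceIndep σ).erase v₀)) (faceFlag σ)) := by
    refine ⟨indep_subset f g1 (Finset.erase_subset _ _), ?_, ?_, ?_⟩
    · intro G hG
      rcases Finset.mem_insert.mp hG with h | h
      · exact h ▸ hXflat
      · exact g2 G h
    · intro G hG G' hG'
      rcases Finset.mem_insert.mp hG with h | h
      · subst h
        rcases Finset.mem_insert.mp hG' with h' | h'
        · subst h'; exact Or.inl Finset.Subset.rfl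
        · exact Or.inl (hXle G' h')
      · rcases Finset.mem_insert.mp hG' with h' | h'
        · subst h'; exact Or.inr (hXle G h)
        · exact g3 G h G' h'
    · intro G hG
      rcases Finset.mem_insert.mp hG with h | h
      · exact h ▸ Finset.Subset.rfl
      · exact hXle G h
  obtain ⟨t, hsub, hft⟩ := exists_facet_superset f (mkFace_mem_augBergman f hgood)
  obtain ⟨k1, k2, k3, k4⟩ := goodPair_of_mem f hft.1
  have hsub2 : (faceIndep σ).erase v₀ ⊆ faceIndep t ∧
      insert (f.cl ((faceIndep σ).erase v₀)) (faceFlag σ) ⊆ faceFlag t := by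
    rw [eq_mkFace t, mkFace_subset_mkFace] at hsub
    exact hsub
  have hXt : f.cl ((faceIndep σ).erase v₀) ∈ faceFlag t :=
    hsub2.2 (Finset.mem_insert_self _ _)
  have hJ : faceIndep t = (faceIndep σ).erase v₀ := by
    apply Finset.Subset.antisymm _ hsub2.1
    intro j hj
    by_contra hjn
    have hjX : j ∈ f.cl ((faceIndep σ).erase v₀) := k4 _ hXt (f.subset_cl _ hj)
    exact not_indep_insert f hjX hjn (indep_subset f k1 (Finset.insert_subset hj hsub2.1))
  refine ⟨t, hft, ?_, hJ, ⟨_, hXt⟩⟩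
  intro x hx
  obtain ⟨hxne, hxσ⟩ := Finset.mem_erase.mp hx
  rw [eq_mkFace σ] at hxσ
  rw [eq_mkFace t]
  cases x with
  | inl i =>
    rw [mem_mkFace_inl] at hxσ ⊢
    rw [hJ]
    exact Finset.mem_erase.mpr ⟨fun h => hxne (by rw [h]), hxσ⟩
  | inr G =>
    rw [mem_mkFace_inr] at hxσ ⊢
    exact hsub2.2 (Finset.mem_insert_of_mem hxσ)

end ClosureOp
namespace ClosureOp

set_option linter.unusedSectionVars false

variable {E : Type*} [Fintype E] [DecidableEq E]

lemma mem_faceIndep {s : Finset (E ⊕ Finset E)} {x : E} :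
    x ∈ faceIndep s ↔ Sum.inl x ∈ s := Finset.mem_preimage

lemma mem_faceFlag {s : Finset (E ⊕ Finset E)} {G : Finset E} :
    G ∈ faceFlag s ↔ Sum.inr G ∈ s := Finset.mem_preimage

lemma image_up_image_dn (f : ClosureOp E) {F : Finset E} {C : Finset (Finset E)}
    (h : ∀ G ∈ C, F ⊆ G) :
    (C.image (dnFlat F)).image (upFlat F) = C := by
  rw [Finset.image_image]
  have h2 : Set.EqOn (upFlat F ∘ dnFlat F) id (C : Set (Finset E)) := fun G hG =>
    upFlat_dnFlat (h G hG)
  rw [Finset.image_congr h2, Finset.image_id]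

lemma image_dn_image_up (f : ClosureOp E) {F : Finset E}
    {c : Finset (Finset {x // x ∉ F})} :
    (c.image (upFlat F)).image (dnFlat F) = c := by
  rw [Finset.image_image]
  have h2 : Set.EqOn (dnFlat F ∘ upFlat F) id (c : Set (Finset {x // x ∉ F})) :=
    fun A _ => dnFlat_upFlat A
  rw [Finset.image_congr h2, Finset.image_id]

lemma sdiff_image_eq_dn_image (f : ClosureOp E) {F : Finset E} (C : Finset (Finset E)) :
    C.image (fun G => G \ F) = (C.image (dnFlat F)).image (fun A => A.image Subtype.val) := by
  rw [Finset.image_image]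
  apply Finset.image_congr
  intro G _
  show G \ F = (dnFlat F G).image Subtype.val
  rw [dnFlat, subtype_val_image, Finset.sdiff_eq_filter]

/-- Case A of the wall lemma: both facets have the same independent part. -/
lemma caseA (f : ClosureOp E)
    (sh : (F : Finset E) → List (Finset (Finset {x // x ∉ F})))
    (r : Finset E → Finset E → Prop)
    {σb σa : Finset (E ⊕ Finset E)}
    (hfb : IsFacet f.augBergman σb) (hfa : IsFacet f.augBergman σa)
    (hCb : (faceFlag σb).Nonempty) (hCa : (faceFlag σa).Nonempty)
    (hII : faceIndep σb = faceIndep σa)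
    (hne : σb ≠ σa)
    (hshF : IsShelling ((f.contract (f.cl (faceIndep σb))).bergman)
      (sh (f.cl (faceIndep σb))))
    (hnlp : ¬ ListPrec ((sh (f.cl (faceIndep σb))).map
        (fun c => c.image (fun G => G.image Subtype.val)))
      (f.reducedFlag σb) (f.reducedFlag σa)) :
    ∃ G, Sum.inr G ∈ σb ∧ Sum.inr G ∉ σa ∧
      ∃ t, IsFacet f.augBergman t ∧ t ≠ σb ∧ σb.erase (Sum.inr G) ⊆ t ∧
        f.augPrec r sh t σb := by
  obtain ⟨gb1, gb2, gb3, gb4⟩ := goodPair_of_mem f hfb.1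
  obtain ⟨ga1, ga2, ga3, ga4⟩ := goodPair_of_mem f hfa.1
  obtain ⟨hFmem, hFp⟩ := facet_flag_nonempty_props f hfb hCb
  have hFmema : f.cl (faceIndep σb) ∈ faceFlag σa := by
    have := (facet_flag_nonempty_props f hfa hCa).1
    rwa [← hII] at this
  obtain ⟨shnd, shenum, shpure⟩ := hshF
  have hcfacb := isFacet_down f hfb hCb
  have hcfaca := isFacet_down f hfa hCa
  rw [← hII] at hcfaca
  obtain ⟨p, hp, hcp⟩ := List.mem_iff_getElem.mp ((shenum _).mpr hcfacb)
  obtain ⟨q, hq, hcq⟩ := List.mem_iff_getElem.mp ((shenum _).mpr hcfaca)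
  have hups : ∀ G ∈ (faceFlag σb).erase (f.cl (faceIndep σb)), f.cl (faceIndep σb) ⊆ G :=
    fun G hG => gb4 G (Finset.mem_of_mem_erase hG)
  have hupsa : ∀ G ∈ (faceFlag σa).erase (f.cl (faceIndep σb)), f.cl (faceIndep σb) ⊆ G :=
    fun G hG => hII ▸ ga4 G (Finset.mem_of_mem_erase hG)
  have hcne : ((faceFlag σb).erase (f.cl (faceIndep σb))).image (dnFlat (f.cl (faceIndep σb))) ≠
      ((faceFlag σa).erase (f.cl (faceIndep σb))).image (dnFlat (f.cl (faceIndep σb))) := by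
    intro h
    apply hne
    have h2 := congrArg (Finset.image (upFlat (f.cl (faceIndep σb)))) h
    rw [image_up_image_dn f hups, image_up_image_dn f hupsa] at h2
    have h3 : faceFlag σb = faceFlag σa := by
      rw [← Finset.insert_erase hFmem, ← Finset.insert_erase hFmema, h2]
    rw [eq_mkFace σb, eq_mkFace σa, hII, h3]
  have hpq : p ≠ q := by
    intro h
    subst h
    apply hcne
    rw [← hcp, ← hcq]
  have hclII : f.cl (faceIndep σa) = f.cl (faceIndep σb) := by rw [hII]
  have hredb : f.reducedFlag σb =
      (((faceFlag σb).erase (f.cl (faceIndep σb))).image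
        (dnFlat (f.cl (faceIndep σb)))).image (fun A => A.image Subtype.val) := by
    rw [reducedFlag, ← sdiff_image_eq_dn_image f]
  have hreda : f.reducedFlag σa =
      (((faceFlag σa).erase (f.cl (faceIndep σb))).image
        (dnFlat (f.cl (faceIndep σb)))).image (fun A => A.image Subtype.val) := by
    rw [reducedFlag, hclII, ← sdiff_image_eq_dn_image f]
  have hqp : q < p := by
    rcases Nat.lt_or_ge q p with h | h
    · exact h
    · exfalso
      apply hnlp
      have hplt : p < q := lt_of_le_of_ne h hpq
      refine ⟨p, q, by simpa using hp, by simpa using hq, hplt, ?_, ?_⟩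
      · rw [List.getElem_map, hcp, ← hredb]
      · rw [List.getElem_map, hcq, ← hreda]
  have hp0 : 0 < p := Nat.lt_of_le_of_lt (Nat.zero_le q) hqp
  have hpureP := shpure p hp hp0
  have hcq_take : (sh (f.cl (faceIndep σb)))[q] ∈ (sh (f.cl (faceIndep σb))).take p :=
    List.mem_take_iff_getElem.mpr ⟨q, lt_min hqp hq, rfl⟩
  have humem : (((faceFlag σb).erase (f.cl (faceIndep σb))).image (dnFlat (f.cl (faceIndep σb)))) ∩
      (((faceFlag σa).erase (f.cl (faceIndep σb))).image (dnFlat (f.cl (faceIndep σb)))) ∈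
      ({t | ∃ s ∈ (sh (f.cl (faceIndep σb))).take p, t ⊆ s} ∩
        {t | t ⊆ (sh (f.cl (faceIndep σb)))[p]}) := by
    constructor
    · exact ⟨_, hcq_take, by rw [hcq]; exact Finset.inter_subset_right⟩
    · show _ ∈ {t | t ⊆ (sh (f.cl (faceIndep σb)))[p]}
      rw [Set.mem_setOf_eq, hcp]
      exact Finset.inter_subset_left
  obtain ⟨t, hut, htmem, htcard⟩ := pure_exists_wall hpureP (fun t ht => ht.2) humem
  have htsub : t ⊆ ((faceFlag σb).erase (f.cl (faceIndep σb))).image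
      (dnFlat (f.cl (faceIndep σb))) := by
    have := htmem.2
    rwa [hcp] at this
  have htcard' : (t.card : ℤ) =
      ((((faceFlag σb).erase (f.cl (faceIndep σb))).image
        (dnFlat (f.cl (faceIndep σb)))).card : ℤ) - 1 := by
    rw [htcard, hcp]; ring
  obtain ⟨g, hgc, hgt, hterase⟩ := facet_eq_erase htsub htcard'
  obtain ⟨s'', hs''take, hts''⟩ := htmem.1
  obtain ⟨p'', hp''m, hs''⟩ := List.mem_take_iff_getElem.mp hs''take
  have hp''p : p'' < p := lt_of_lt_of_le hp''m (min_le_left _ _)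
  have hp''len : p'' < (sh (f.cl (faceIndep σb))).length :=
    lt_of_lt_of_le hp''m (min_le_right _ _)
  have hs''fac : IsFacet ((f.contract (f.cl (faceIndep σb))).bergman) s'' :=
    (shenum s'').mp (hs'' ▸ List.getElem_mem hp''len)
  obtain ⟨G, hGe, hGdn⟩ := Finset.mem_image.mp hgc
  have hGflag : G ∈ faceFlag σb := Finset.mem_of_mem_erase hGe
  have hGF : f.cl (faceIndep σb) ⊆ G := hups G hGe
  -- the lifted facet
  have hs''up := isFacet_up f gb1 hFp hs''fac
  set σc := mkFace (faceIndep σb)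
    (insert (f.cl (faceIndep σb)) (s''.image (upFlat (f.cl (faceIndep σb))))) with hσc
  have hIc : faceIndep σc = faceIndep σb := faceIndep_mkFace _ _
  have hCc : faceFlag σc =
      insert (f.cl (faceIndep σb)) (s''.image (upFlat (f.cl (faceIndep σb)))) :=
    faceFlag_mkFace _ _
  have hFnotup : f.cl (faceIndep σb) ∉ s''.image (upFlat (f.cl (faceIndep σb))) := by
    intro h
    obtain ⟨A, hA, hAeq⟩ := Finset.mem_image.mp h
    have hAne : A.Nonempty :=
      (((mem_bergman_contract_iff f (f.cl_idem _)).mp hs''fac.1).1 A hA).2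
    exact upFlat_ne hAne hAeq
  have hcneq : σc ≠ σb := by
    intro h
    have h2 : faceFlag σb =
        insert (f.cl (faceIndep σb)) (s''.image (upFlat (f.cl (faceIndep σb)))) := by
      have := congrArg faceFlag h
      rw [hCc] at this
      exact this.symm
    have h3 : (faceFlag σb).erase (f.cl (faceIndep σb)) =
        s''.image (upFlat (f.cl (faceIndep σb))) := by
      rw [h2, Finset.erase_insert hFnotup]
    have h4 : ((faceFlag σb).erase (f.cl (faceIndep σb))).image
        (dnFlat (f.cl (faceIndep σb))) = s'' := by
      rw [h3, image_dn_image_up f]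
    have h5 : (sh (f.cl (faceIndep σb)))[p''] = (sh (f.cl (faceIndep σb)))[p] := by
      rw [hs'', hcp, h4]
    exact absurd (shnd.getElem_inj_iff.mp h5) (Nat.ne_of_lt hp''p)
  refine ⟨G, mem_faceFlag.mp hGflag, ?_, σc, hs''up, hcneq, ?_, ?_⟩
  · -- Sum.inr G ∉ σa
    intro h
    have hGa : G ∈ faceFlag σa := mem_faceFlag.mpr h
    have hGne : G ≠ f.cl (faceIndep σb) := (Finset.mem_erase.mp hGe).1
    have hgc' : g ∈ ((faceFlag σa).erase (f.cl (faceIndep σb))).image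
        (dnFlat (f.cl (faceIndep σb))) := by
      rw [← hGdn]
      exact Finset.mem_image_of_mem _ (Finset.mem_erase.mpr ⟨hGne, hGa⟩)
    exact hgt (hut (Finset.mem_inter.mpr ⟨hgc, hgc'⟩))
  · -- wall containment
    intro x hx
    obtain ⟨hxne, hxσ⟩ := Finset.mem_erase.mp hx
    cases x with
    | inl i =>
      have : i ∈ faceIndep σb := mem_faceIndep.mpr hxσ
      exact mem_faceIndep.mp (by rwa [hIc])
    | inr G' =>
      have hG' : G' ∈ faceFlag σb := mem_faceFlag.mpr hxσ
      apply mem_faceFlag.mp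
      rw [hCc]
      by_cases hG'F : G' = f.cl (faceIndep σb)
      · rw [hG'F]; exact Finset.mem_insert_self _ _
      · have hG'e : G' ∈ (faceFlag σb).erase (f.cl (faceIndep σb)) :=
          Finset.mem_erase.mpr ⟨hG'F, hG'⟩
        have hdnmem : dnFlat (f.cl (faceIndep σb)) G' ∈
            ((faceFlag σb).erase (f.cl (faceIndep σb))).image
              (dnFlat (f.cl (faceIndep σb))) := Finset.mem_image_of_mem _ hG'e
        have hdng : dnFlat (f.cl (faceIndep σb)) G' ≠ g := by
          intro h
          apply hxne
          have : G' = G := dnFlat_inj (hups _ hG'e) hGF (h.trans hGdn.symm)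
          rw [this]
        have hdnt : dnFlat (f.cl (faceIndep σb)) G' ∈ t := by
          rw [hterase]
          exact Finset.mem_erase.mpr ⟨hdng, hdnmem⟩
        have hdns'' : dnFlat (f.cl (faceIndep σb)) G' ∈ s'' := hts'' hdnt
        apply Finset.mem_insert_of_mem
        have := Finset.mem_image_of_mem (upFlat (f.cl (faceIndep σb))) hdns''
        rwa [upFlat_dnFlat (hups _ hG'e)] at this
  · -- augPrec σc σb
    left
    refine ⟨?_, hCb, Or.inr ⟨hIc, ?_⟩⟩
    · rw [hCc]; exact Finset.insert_nonempty _ _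
    · -- ListPrec
      rw [hIc]
      have hredc : f.reducedFlag σc = s''.image (fun A => A.image Subtype.val) := by
        rw [reducedFlag, hIc, hCc, Finset.erase_insert hFnotup, Finset.image_image]
        apply Finset.image_congr
        intro A _
        exact upFlat_sdiff
      refine ⟨p'', p, by simpa using hp''len, by simpa using hp, hp''p, ?_, ?_⟩
      · rw [List.getElem_map, hs'', hredc]
      · rw [List.getElem_map, hcp, ← hredb]

end ClosureOp
namespace ClosureOp

set_option linter.unusedSectionVars false

variable {E : Type*} [Fintype E] [DecidableEq E]

lemma exists_wall (f : ClosureOp E)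
    (sh : (F : Finset E) → List (Finset (Finset {x // x ∉ F})))
    (hsh : ∀ F : Finset E, f.IsProperFlat F →
      IsShelling ((f.contract F).bergman) (sh F))
    (r : Finset E → Finset E → Prop)
    (hr_ext : ∀ I I', f.Indep I → f.Indep I' → I ⊂ I' → r I I')
    (l : List (Finset (E ⊕ Finset E)))
    (hnodup : l.Nodup)
    (hfac : ∀ s, s ∈ l ↔ IsFacet f.augBergman s)
    (hcompat : ∀ (i j : ℕ) (hi : i < l.length) (hj : j < l.length), i < j →
      ¬ f.augPrec r sh l[j] l[i])
    (a b : ℕ) (ha : a < l.length) (hb : b < l.length) (hab : a < b) :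
    ∃ v ∈ l[b], v ∉ l[a] ∧ ∃ (e : ℕ) (he : e < l.length), e < b ∧ l[b].erase v ⊆ l[e] := by
  have hfb : IsFacet f.augBergman l[b] := (hfac _).mp (List.getElem_mem hb)
  have hfa : IsFacet f.augBergman l[a] := (hfac _).mp (List.getElem_mem ha)
  have hba_ne : l[b] ≠ l[a] := fun h => absurd (hnodup.getElem_inj_iff.mp h) (by omega)
  have hnp : ¬ f.augPrec r sh l[b] l[a] := hcompat a b ha hb hab
  obtain ⟨gb1, gb2, gb3, gb4⟩ := goodPair_of_mem f hfb.1
  obtain ⟨ga1, ga2, ga3, ga4⟩ := goodPair_of_mem f hfa.1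
  have hearlier : ∀ t, IsFacet f.augBergman t → t ≠ l[b] → f.augPrec r sh t l[b] →
      ∃ (e : ℕ) (he : e < l.length), e < b ∧ l[e] = t := by
    intro t hft htne hprec
    obtain ⟨e, he, het⟩ := List.mem_iff_getElem.mp ((hfac t).mpr hft)
    refine ⟨e, he, ?_, het⟩
    rcases lt_trichotomy e b with h | h | h
    · exact h
    · subst h; exact absurd het.symm htne
    · exfalso
      have := hcompat b e hb he h
      rw [het] at this
      exact this hprec
  rcases Finset.eq_empty_or_nonempty (faceFlag l[b]) with hCb | hCb
  · -- Case C : l[b] is a basis facet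
    have hclb : f.cl (faceIndep l[b]) = Finset.univ := facet_cl_univ_of_flag_empty f hfb hCb
    have hIne : faceIndep l[a] ≠ faceIndep l[b] := by
      intro h
      apply hba_ne
      have hCa : faceFlag l[a] = ∅ := by
        rw [Finset.eq_empty_iff_forall_notMem]
        intro F hF
        have h2 : Finset.univ ⊆ F := by
          rw [← hclb, ← h]
          exact ga4 F hF
        exact (ga2 F hF).2 (Finset.Subset.antisymm (Finset.subset_univ F) h2)
      rw [eq_mkFace l[b], eq_mkFace l[a], h, hCa, hCb]
    obtain ⟨v₀, hvb, hva⟩ : ∃ v₀ ∈ faceIndep l[b], v₀ ∉ faceIndep l[a] := by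
      by_contra hc
      push_neg at hc
      have hss : faceIndep l[b] ⊂ faceIndep l[a] :=
        Finset.ssubset_iff_subset_ne.mpr ⟨hc, fun h => hIne h.symm⟩
      obtain ⟨j, hjy, hjn⟩ := Finset.exists_of_ssubset hss
      exact not_indep_insert f (hclb ▸ Finset.mem_univ j) hjn
        (indep_subset f ga1 (Finset.insert_subset hjy hss.subset))
    obtain ⟨t, hft, hwall, hJ, hDne⟩ := exists_wall_facet_inl f hfb hvb
    have htne : t ≠ l[b] := by
      intro h
      have h2 : Sum.inl v₀ ∈ t := by
        rw [h]
        exact mem_faceIndep.mp hvb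
      rw [← mem_faceIndep, hJ] at h2
      exact Finset.notMem_erase v₀ _ h2
    have hprec : f.augPrec r sh t l[b] := Or.inr ⟨hDne, hCb⟩
    obtain ⟨e, he, heb, het⟩ := hearlier t hft htne hprec
    refine ⟨Sum.inl v₀, mem_faceIndep.mp hvb, fun h => hva (mem_faceIndep.mpr h),
      e, he, heb, ?_⟩
    rw [het]
    exact hwall
  · have hCa : (faceFlag l[a]).Nonempty := by
      rcases Finset.eq_empty_or_nonempty (faceFlag l[a]) with h | h
      · exact absurd (Or.inr ⟨hCb, h⟩) hnp
      · exact h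
    by_cases hII : faceIndep l[b] = faceIndep l[a]
    · -- Case A
      have hFp : f.IsProperFlat (f.cl (faceIndep l[b])) :=
        (facet_flag_nonempty_props f hfb hCb).2
      have hnlp : ¬ ListPrec ((sh (f.cl (faceIndep l[b]))).map
          (fun c => c.image (fun G => G.image Subtype.val)))
          (f.reducedFlag l[b]) (f.reducedFlag l[a]) :=
        fun hlp => hnp (Or.inl ⟨hCb, hCa, Or.inr ⟨hII, hlp⟩⟩)
      obtain ⟨G, hGb, hGa, t, hft, htne, hwall, hprec⟩ :=
        caseA f sh r hfb hfa hCb hCa hII hba_ne (hsh _ hFp) hnlp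
      obtain ⟨e, he, heb, het⟩ := hearlier t hft htne hprec
      refine ⟨Sum.inr G, hGb, hGa, e, he, heb, ?_⟩
      rw [het]
      exact hwall
    · -- Case B
      have hnr : ¬ r (faceIndep l[b]) (faceIndep l[a]) :=
        fun hr => hnp (Or.inl ⟨hCb, hCa, Or.inl hr⟩)
      obtain ⟨v₀, hvb, hva⟩ : ∃ v₀ ∈ faceIndep l[b], v₀ ∉ faceIndep l[a] := by
        by_contra hc
        push_neg at hc
        exact hnr (hr_ext _ _ gb1 ga1 (Finset.ssubset_iff_subset_ne.mpr ⟨hc, hII⟩))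
      obtain ⟨t, hft, hwall, hJ, hDne⟩ := exists_wall_facet_inl f hfb hvb
      have htne : t ≠ l[b] := by
        intro h
        have h2 : Sum.inl v₀ ∈ t := by
          rw [h]
          exact mem_faceIndep.mp hvb
        rw [← mem_faceIndep, hJ] at h2
        exact Finset.notMem_erase v₀ _ h2
      have hJind : f.Indep (faceIndep t) := (goodPair_of_mem f hft.1).1
      have hprec : f.augPrec r sh t l[b] := by
        left
        refine ⟨hDne, hCb, Or.inl ?_⟩
        apply hr_ext _ _ hJind gb1
        rw [hJ]
        exact Finset.erase_ssubset hvb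
      obtain ⟨e, he, heb, het⟩ := hearlier t hft htne hprec
      refine ⟨Sum.inl v₀, mem_faceIndep.mp hvb, fun h => hva (mem_faceIndep.mpr h),
        e, he, heb, ?_⟩
      rw [het]
      exact hwall

end ClosureOp
/-- Let `f` be a closure operator such that each Bergman complex
`Δ(f/F)` (`F` a proper flat) is shellable, with a fixed shelling `sh F`; let `r` be a
linear extension of the independence complex of `f` (a strict total order on
independent sets refining strict inclusion).  Then any enumeration of the facets of
`Δ̂(f)` compatible with the flag-to-basis order `≺` (`augPrec f r sh`) — facets with
nonempty flag ordered first by `r` on independent parts, then by position of the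
reduced flags in the fixed shelling of `Δ(f/f(I))`, with basis facets last in any
order — is a shelling order of `Δ̂(f)`. -/
theorem augPrec_is_shelling_order
    {E : Type*} [Fintype E] [DecidableEq E] (f : ClosureOp E)
    (sh : (F : Finset E) → List (Finset (Finset {x // x ∉ F})))
    (hsh : ∀ F : Finset E, f.IsProperFlat F →
      IsShelling ((f.contract F).bergman) (sh F))
    (r : Finset E → Finset E → Prop)
    (hr_total : ∀ I I', f.Indep I → f.Indep I' → I ≠ I' → r I I' ∨ r I' I)
    (hr_asymm : ∀ I I', f.Indep I → f.Indep I' → r I I' → ¬ r I' I)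
    (hr_trans : ∀ I I' I'', f.Indep I → f.Indep I' → f.Indep I'' →
      r I I' → r I' I'' → r I I'')
    (hr_ext : ∀ I I', f.Indep I → f.Indep I' → I ⊂ I' → r I I')
    (l : List (Finset (E ⊕ Finset E)))
    (hnodup : l.Nodup)
    (hfac : ∀ s, s ∈ l ↔ IsFacet f.augBergman s)
    (hcompat : ∀ (i j : ℕ) (hi : i < l.length) (hj : j < l.length), i < j →
      ¬ f.augPrec r sh l[j] l[i]) :
    IsShelling f.augBergman l := by
  refine ⟨hnodup, hfac, ?_⟩
  intro i hi hi0
  constructor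
  · exact ⟨∅, ⟨l[0], List.mem_take_iff_getElem.mpr ⟨0, lt_min hi0 (by omega), rfl⟩,
      Finset.empty_subset _⟩, Finset.empty_subset _⟩
  · intro t htfac
    obtain ⟨⟨s, hs_take, hts⟩, htsub⟩ := htfac.1
    obtain ⟨a, ham, has⟩ := List.mem_take_iff_getElem.mp hs_take
    have ha : a < l.length := lt_of_lt_of_le ham (min_le_right _ _)
    have hai : a < i := lt_of_lt_of_le ham (min_le_left _ _)
    obtain ⟨v, hvb, hva, e, he, hei, hwall⟩ :=
      ClosureOp.exists_wall f sh hsh r hr_ext l hnodup hfac hcompat a i ha hi hai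
    have hwmem : l[i].erase v ∈ ({t | ∃ s ∈ l.take i, t ⊆ s} ∩ {t | t ⊆ l[i]}) :=
      ⟨⟨l[e], List.mem_take_iff_getElem.mpr ⟨e, lt_min hei he, rfl⟩, hwall⟩,
        Finset.erase_subset _ _⟩
    have htw : t ⊆ l[i].erase v := by
      intro x hx
      refine Finset.mem_erase.mpr ⟨?_, htsub hx⟩
      intro hxv
      subst hxv
      apply hva
      rw [has]
      exact hts hx
    have hteq : t = l[i].erase v := htfac.2 _ hwmem htw
    rw [hteq]
    have hcard : 1 ≤ l[i].card := Finset.card_pos.mpr ⟨v, hvb⟩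
    rw [Finset.card_erase_of_mem hvb, Nat.cast_sub hcard]
    push_cast
    ring
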